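/- Under the geometric hypotheses: ω ⊂ ℝ² a bounded domain, θ : closure(ω) → ℝ³ injective of class C³ with a_α := ∂_α θ linearly independent on closure(ω), a₃ := (a₁ × a₂)/|a₁ × a₂|, Θ(y, x₃) := θ(y) + x₃ a₃(y), and ε₀ > 0 such that g_i := ∂_i Θ are linearly independent on closure(ω) × [−ε₀, ε₀], let θ_v ≥ 0 and ρ > 0, let Ω := ω × (−1,1), and for 0 < ε ≤ ε₀ define (g^{ij}(ε)(x)) as the inverse of (g_i · g_j)(y, εx₃) and B^{ijkl}(ε) := θ_v g^{ij}(ε) g^{kl}(ε) + (ρ/2)(g^{ik}(ε) g^{jl}(ε) + g^{il}(ε) g^{jk}(ε)). Then there exists a constant C_v > 0, independent of ε and x, such that for all ε with 0 < ε ≤ ε₀, all x ∈ closure(Ω), and all symmetric 3×3 real matrices t = (t_{ij}): Σ_{i,j=1}^{3} |t_{ij}|² ≤ C_v · Σ_{i,j,k,l=1}^{3} B^{ijkl}(ε)(x) t_{kl} t_{ij}. -/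

import Mathlib

/-!
Write `A = G⁻¹` for the inverse metric at `(y, ε x₃)`. For symmetric `t`,
`∑ B^{ijkl} t_kl t_ij = θ_v (∑ A_ij t_ij)² + ρ tr(A t A t)`, and `tr(A t A t) ≥ m² tr(t t)` as soon
as `A ≥ m I`. As a Gram matrix, `G ≤ (∑ᵢ |gᵢ|²) I`, so a bound `∑ᵢ |gᵢ|² ≤ M` gives `G⁻¹ ≥ M⁻¹ I`
and `C_v = M² / ρ`. Such an `M` exists uniformly because `(y, ε x₃)` ranges over the compact set
`closure ω × [-ε₀, ε₀]`, near which `Θ` is `C¹` (`a₁ × a₂ ≠ 0` there, so `a₃` is `C¹`).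
-/

open Set Matrix
open scoped MatrixOrder

namespace Matrix

variable {n m : Type*}

lemma PosSemidef.of_smul_one_le [DecidableEq n] {A : Matrix n n ℝ} {c : ℝ} (hc : 0 ≤ c)
    (hA : c • 1 ≤ A) : A.PosSemidef := by
  simpa using (PosSemidef.one.smul hc).add hA

variable [Fintype n] [Fintype m]

lemma le_of_dotProduct_mulVec_le {A B : Matrix n n ℝ} (hA : A.IsSymm) (hB : B.IsSymm)
    (h : ∀ x, x ⬝ᵥ A *ᵥ x ≤ x ⬝ᵥ B *ᵥ x) : A ≤ B := by
  refine PosSemidef.of_dotProduct_mulVec_nonneg ?_ fun x => ?_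
  · exact (conjTranspose_eq_transpose_of_trivial _).trans (hB.sub hA)
  · simpa [sub_mulVec, star_trivial] using h x

lemma mul_transpose_self_le_smul_one [DecidableEq n] {W : Matrix n m ℝ} {M : ℝ}
    (hW : ∑ i, ∑ j, W i j ^ 2 ≤ M) : W * Wᵀ ≤ M • 1 := by
  refine le_of_dotProduct_mulVec_le (transpose_mul _ _) (by simp [IsSymm]) fun x => ?_
  rw [smul_mulVec, one_mulVec, dotProduct_smul, smul_eq_mul, ← mulVec_mulVec,
    dotProduct_mulVec, ← mulVec_transpose]
  simp only [dotProduct, mulVec, transpose_apply, ← sq]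
  calc ∑ j, (∑ i, W i j * x i) ^ 2 ≤ ∑ j, (∑ i, W i j ^ 2) * ∑ i, x i ^ 2 :=
        Finset.sum_le_sum fun j _ => Finset.sum_mul_sq_le_sq_mul_sq _ _ _
    _ = (∑ i, ∑ j, W i j ^ 2) * ∑ i, x i ^ 2 := by rw [← Finset.sum_mul, Finset.sum_comm]
    _ ≤ M * ∑ i, x i ^ 2 := by gcongr

lemma smul_one_le_inv_of_le_smul_one [DecidableEq n] {G : Matrix n n ℝ} (hG : G.PosDef)
    {M : ℝ} (hM : 0 < M) (hGM : G ≤ M • 1) : M⁻¹ • 1 ≤ G⁻¹ := by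
  set P := M • 1 - G
  have hdet : IsUnit G.det := hG.isUnit.map detMonoidHom
  have key : G⁻¹ - M⁻¹ • 1 = (M⁻¹ ^ 2) • (P + Pᴴ * G⁻¹ * P) := by
    rw [show Pᴴ = P from hGM.isHermitian]
    simp only [P, sub_mul, mul_sub, smul_mul_assoc, mul_smul_comm, Matrix.one_mul,
      Matrix.mul_one, nonsing_inv_mul _ hdet, mul_nonsing_inv _ hdet]
    match_scalars <;> field_simp <;> ring
  show (G⁻¹ - M⁻¹ • 1).PosSemidef
  rw [key]
  exact (hGM.add (hG.inv.posSemidef.conjTranspose_mul_mul_same P)).smul (by positivity)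

lemma smul_one_le_inv_mul_transpose_self [DecidableEq n] {W : Matrix n m ℝ}
    (hW : LinearIndependent ℝ W.row) {M : ℝ} (hM : 0 < M) (hWM : ∑ i, ∑ j, W i j ^ 2 ≤ M) :
    M⁻¹ • 1 ≤ (W * Wᵀ)⁻¹ :=
  smul_one_le_inv_of_le_smul_one
    (by simpa using PosDef.mul_conjTranspose_self W (vecMul_injective_iff.2 hW)) hM
    (mul_transpose_self_le_smul_one hWM)

lemma trace_mul_nonneg [DecidableEq n] {P Q : Matrix n n ℝ} (hP : P.PosSemidef)
    (hQ : Q.PosSemidef) : 0 ≤ (P * Q).trace := by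
  obtain ⟨B, rfl⟩ := CStarAlgebra.nonneg_iff_eq_star_mul_self.mp hP.nonneg
  rw [star_eq_conjTranspose, Matrix.mul_assoc, trace_mul_comm]
  exact (hQ.mul_mul_conjTranspose_same B).trace_nonneg

lemma trace_mul_le_trace_mul [DecidableEq n] {P A B : Matrix n n ℝ} (hP : P.PosSemidef)
    (hAB : A ≤ B) : (A * P).trace ≤ (B * P).trace := by
  have := trace_mul_nonneg hAB hP
  rwa [sub_mul, trace_sub, sub_nonneg] at this

lemma sq_mul_trace_mul_self_le [DecidableEq n] {A t : Matrix n n ℝ} {c : ℝ} (hc : 0 ≤ c)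
    (hA : c • 1 ≤ A) (ht : t.IsSymm) : c ^ 2 * (t * t).trace ≤ (A * t * A * t).trace := by
  have htt : (t * t).PosSemidef := by simpa [ht.eq] using posSemidef_conjTranspose_mul_self t
  have htAt : (t * A * t).PosSemidef := by
    simpa [ht.eq] using (PosSemidef.of_smul_one_le hc hA).conjTranspose_mul_mul_same t
  calc c ^ 2 * (t * t).trace = c * ((c • 1) * (t * t)).trace := by
        simp [trace_smul, sq, mul_assoc]
    _ ≤ c * (A * (t * t)).trace := by gcongr; exact trace_mul_le_trace_mul htt hA
    _ = c * (t * A * t).trace := by rw [← Matrix.mul_assoc, trace_mul_comm, Matrix.mul_assoc]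
    _ = ((c • 1) * (t * A * t)).trace := by simp [trace_smul]
    _ ≤ (A * (t * A * t)).trace := trace_mul_le_trace_mul htAt hA
    _ = (A * t * A * t).trace := by simp only [Matrix.mul_assoc]

lemma trace_mul_self_of_isSymm {t : Matrix n n ℝ} (ht : t.IsSymm) :
    (t * t).trace = ∑ i, ∑ j, |t i j| ^ 2 := by
  simp [trace, mul_apply, ht.apply, sq]

lemma sum_isotropic_tensor_eq (thv rho : ℝ) {A t : Matrix n n ℝ} (hA : A.IsSymm)
    (ht : t.IsSymm) :
    ∑ i, ∑ j, ∑ k, ∑ l,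
      (thv * A i j * A k l + rho / 2 * (A i k * A j l + A i l * A j k)) * t k l * t i j
      = thv * (∑ i, ∑ j, A i j * t i j) ^ 2 + rho * (A * t * A * t).trace := by
  have h0 : ∑ i, ∑ j, ∑ k, ∑ l, A i j * A k l * t k l * t i j
      = (∑ i, ∑ j, A i j * t i j) ^ 2 := by
    simp only [sq, Finset.sum_mul, Finset.mul_sum]
    exact Finset.sum_congr rfl fun i _ => Finset.sum_congr rfl fun j _ =>
      Finset.sum_congr rfl fun k _ => Finset.sum_congr rfl fun l _ => by ring
  have h1 : ∑ i, ∑ j, ∑ k, ∑ l, A i k * A j l * t k l * t i j = (A * t * A * t).trace := by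
    simp only [trace, diag, mul_apply, Finset.sum_mul]
    refine Finset.sum_congr rfl fun i _ => Finset.sum_congr rfl fun j _ => ?_
    rw [Finset.sum_comm]
    refine Finset.sum_congr rfl fun l _ => Finset.sum_congr rfl fun k _ => ?_
    rw [hA.apply j l, ht.apply i j]
    ring
  have h2 : ∑ i, ∑ j, ∑ k, ∑ l, A i l * A j k * t k l * t i j = (A * t * A * t).trace := by
    simp only [trace, diag, mul_apply, Finset.sum_mul]
    refine Finset.sum_congr rfl fun i _ => Finset.sum_congr rfl fun j _ =>
      Finset.sum_congr rfl fun k _ => Finset.sum_congr rfl fun l _ => ?_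
    rw [hA.apply j k, ht.apply i j, ht.apply k l]
    ring
  calc _ = thv * ∑ i, ∑ j, ∑ k, ∑ l, A i j * A k l * t k l * t i j
        + rho / 2 * (∑ i, ∑ j, ∑ k, ∑ l, A i k * A j l * t k l * t i j
          + ∑ i, ∑ j, ∑ k, ∑ l, A i l * A j k * t k l * t i j) := by
        simp only [Finset.mul_sum, ← Finset.sum_add_distrib]
        exact Finset.sum_congr rfl fun i _ => Finset.sum_congr rfl fun j _ =>
          Finset.sum_congr rfl fun k _ => Finset.sum_congr rfl fun l _ => by ring
    _ = _ := by rw [h0, h1, h2]; ring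

lemma sum_sq_le_mul_sum_isotropic_tensor [DecidableEq n] {A t : Matrix n n ℝ} {thv rho M : ℝ}
    (hthv : 0 ≤ thv) (hrho : 0 < rho) (hM : 0 < M) (hA : M⁻¹ • 1 ≤ A) (ht : t.IsSymm) :
    ∑ i, ∑ j, |t i j| ^ 2 ≤ M ^ 2 / rho * ∑ i, ∑ j, ∑ k, ∑ l,
      (thv * A i j * A k l + rho / 2 * (A i k * A j l + A i l * A j k)) * t k l * t i j := by
  have hAs : A.IsSymm :=
    isHermitian_iff_isSymm.1 (PosSemidef.of_smul_one_le (inv_nonneg.2 hM.le) hA).isHermitian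
  rw [sum_isotropic_tensor_eq thv rho hAs ht, ← trace_mul_self_of_isSymm ht]
  have hmain := sq_mul_trace_mul_self_le (inv_nonneg.2 hM.le) hA ht
  calc (t * t).trace = M ^ 2 * (M⁻¹ ^ 2 * (t * t).trace) := by field_simp
    _ ≤ M ^ 2 * (A * t * A * t).trace := by gcongr
    _ = M ^ 2 / rho * (rho * (A * t * A * t).trace) := by field_simp
    _ ≤ _ := by gcongr; exact le_add_of_nonneg_left (by positivity)

end Matrix

lemma IsCompact.exists_pos_forall_le {X : Type*} [TopologicalSpace X] {K : Set X}
    (hK : IsCompact K) {f : X → ℝ} (hf : ContinuousOn f K) : ∃ M > 0, ∀ x ∈ K, f x ≤ M := by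
  obtain ⟨C, hC⟩ := hK.bddAbove_image hf
  exact ⟨max C 1, lt_max_of_lt_right one_pos,
    fun x hx => (hC ⟨x, hx, rfl⟩).trans (le_max_left _ _)⟩

section

variable {E : Type*} [NormedAddCommGroup E] [NormedSpace ℝ E] {s : Set E} {n : WithTop ℕ∞}

lemma ContDiffOn.crossProduct {f g : E → Fin 3 → ℝ} (hf : ContDiffOn ℝ n f s)
    (hg : ContDiffOn ℝ n g s) : ContDiffOn ℝ n (fun y => f y ⨯₃ g y) s := by
  have hf' := contDiffOn_pi.1 hf
  have hg' := contDiffOn_pi.1 hg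
  refine contDiffOn_pi.2 fun i => ?_
  fin_cases i <;>
    simp only [cross_apply, Fin.isValue, Fin.zero_eta, Fin.mk_one, Fin.reduceFinMk, cons_val_zero,
      cons_val_one, cons_val] <;>
    fun_prop

lemma ContDiffOn.inv_sqrt_sum_sq_smul {ι : Type*} [Fintype ι] {f : E → ι → ℝ}
    (hf : ContDiffOn ℝ n f s) (hf0 : ∀ y ∈ s, f y ≠ 0) :
    ContDiffOn ℝ n (fun y => (√(∑ i, f y i ^ 2))⁻¹ • f y) s := by
  have hpos : ∀ y ∈ s, 0 < ∑ i, f y i ^ 2 := fun y hy => by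
    obtain ⟨i, hi⟩ := Function.ne_iff.1 (hf0 y hy)
    exact Finset.sum_pos' (fun i _ => sq_nonneg _)
      ⟨i, Finset.mem_univ _, by simpa [sq_pos_iff] using hi⟩
  have hsum : ContDiffOn ℝ n (fun y => ∑ i, f y i ^ 2) s :=
    ContDiffOn.sum fun i _ => (contDiffOn_pi.1 hf i).pow 2
  exact ((hsum.sqrt fun y hy => (hpos y hy).ne').inv
    fun y hy => (Real.sqrt_pos.2 (hpos y hy)).ne').smul hf

end

lemma continuousOn_fderiv_shellChart {U : Set (Fin 2 → ℝ)} (hU : IsOpen U)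
    {θ : (Fin 2 → ℝ) → Fin 3 → ℝ} (hθ : ContDiffOn ℝ 2 θ U)
    {a : Fin 2 → (Fin 2 → ℝ) → Fin 3 → ℝ} (ha : ∀ α y, a α y = fderiv ℝ θ y (Pi.single α 1))
    {c : (Fin 2 → ℝ) → Fin 3 → ℝ} (hc : ∀ y, c y = a 0 y ⨯₃ a 1 y)
    {a3 : (Fin 2 → ℝ) → Fin 3 → ℝ} (ha3 : ∀ y, a3 y = (√(∑ i, c y i ^ 2))⁻¹ • c y)
    {Θ : (Fin 2 → ℝ) × ℝ → Fin 3 → ℝ} (hΘ : ∀ p, Θ p = θ p.1 + p.2 • a3 p.1) :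
    ContinuousOn (fderiv ℝ Θ) ((U ∩ {y | c y ≠ 0}) ×ˢ univ) := by
  have haC : ∀ α, ContDiffOn ℝ 1 (a α) U := fun α =>
    ((hθ.fderiv_of_isOpen hU le_rfl).clm_apply contDiffOn_const).congr fun y _ => ha α y
  have hcC : ContDiffOn ℝ 1 c U := ((haC 0).crossProduct (haC 1)).congr fun y _ => hc y
  have hVo : IsOpen (U ∩ {y | c y ≠ 0}) := hcC.continuousOn.isOpen_inter_preimage hU isOpen_ne
  have ha3C : ContDiffOn ℝ 1 a3 (U ∩ {y | c y ≠ 0}) :=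
    ((hcC.mono inter_subset_left).inv_sqrt_sum_sq_smul fun y hy => hy.2).congr fun y _ => ha3 y
  have hΘC : ContDiffOn ℝ 1 Θ ((U ∩ {y | c y ≠ 0}) ×ˢ univ) := by
    refine (ContDiffOn.add ?_ (contDiffOn_snd.smul ?_)).congr fun p _ => hΘ p
    · exact (hθ.of_le one_le_two).comp contDiffOn_fst fun p hp => hp.1.1
    · exact ha3C.comp contDiffOn_fst fun p hp => hp.1
  exact hΘC.continuousOn_fderiv_of_isOpen (hVo.prod isOpen_univ) le_rfl

theorem stmt15_general (ω : Set (Fin 2 → ℝ)) (hωb : Bornology.IsBounded ω)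
    (U : Set (Fin 2 → ℝ)) (hUo : IsOpen U) (hωU : closure ω ⊆ U)
    (θ : (Fin 2 → ℝ) → Fin 3 → ℝ) (hθ : ContDiffOn ℝ 3 θ U)
    (a : Fin 2 → (Fin 2 → ℝ) → Fin 3 → ℝ)
    (ha : ∀ α y, a α y = fderiv ℝ θ y (Pi.single α 1))
    (hind : ∀ y ∈ closure ω, LinearIndependent ℝ ![a 0 y, a 1 y])
    (c : (Fin 2 → ℝ) → Fin 3 → ℝ)
    (hc : ∀ y, c y = ![a 0 y 1 * a 1 y 2 - a 0 y 2 * a 1 y 1,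
                       a 0 y 2 * a 1 y 0 - a 0 y 0 * a 1 y 2,
                       a 0 y 0 * a 1 y 1 - a 0 y 1 * a 1 y 0])
    (a3 : (Fin 2 → ℝ) → Fin 3 → ℝ)
    (ha3 : ∀ y, a3 y = (Real.sqrt (∑ i, c y i ^ 2))⁻¹ • c y)
    (Θ : (Fin 2 → ℝ) × ℝ → Fin 3 → ℝ)
    (hΘ : ∀ p, Θ p = θ p.1 + p.2 • a3 p.1)
    (gvec : Fin 3 → ((Fin 2 → ℝ) × ℝ) → Fin 3 → ℝ)
    (hgvec0 : ∀ p, gvec 0 p = fderiv ℝ Θ p (Pi.single 0 1, 0))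
    (hgvec1 : ∀ p, gvec 1 p = fderiv ℝ Θ p (Pi.single 1 1, 0))
    (hgvec2 : ∀ p, gvec 2 p = fderiv ℝ Θ p (0, 1))
    (ε₀ : ℝ)
    (hgind : ∀ p ∈ closure ω ×ˢ Icc (-ε₀) ε₀,
      LinearIndependent ℝ ![gvec 0 p, gvec 1 p, gvec 2 p])
    (thv rho : ℝ) (hthv : 0 ≤ thv) (hrho : 0 < rho)
    (G : ((Fin 2 → ℝ) × ℝ) → Matrix (Fin 3) (Fin 3) ℝ)
    (hG : ∀ p i j, G p i j = ∑ m, gvec i p m * gvec j p m)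
    (Ginv : ℝ → ((Fin 2 → ℝ) × ℝ) → Matrix (Fin 3) (Fin 3) ℝ)
    (hGinv : ∀ ε p, Ginv ε p = (G (p.1, ε * p.2))⁻¹)
    (Bε : ℝ → ((Fin 2 → ℝ) × ℝ) → Fin 3 → Fin 3 → Fin 3 → Fin 3 → ℝ)
    (hBε : ∀ ε p i j k l, Bε ε p i j k l = thv * Ginv ε p i j * Ginv ε p k l
      + (rho / 2) * (Ginv ε p i k * Ginv ε p j l + Ginv ε p i l * Ginv ε p j k)) :
    ∃ Cv > (0 : ℝ), ∀ ε : ℝ, 0 < ε → ε ≤ ε₀ →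
      ∀ p ∈ closure ω ×ˢ Icc (-1 : ℝ) 1,
        ∀ t : Matrix (Fin 3) (Fin 3) ℝ, t.IsSymm →
          ∑ i, ∑ j, |t i j| ^ 2 ≤ Cv * ∑ i, ∑ j, ∑ k, ∑ l, Bε ε p i j k l * t k l * t i j := by
  set K := closure ω ×ˢ Icc (-ε₀) ε₀
  have hcross : ∀ y, c y = a 0 y ⨯₃ a 1 y := fun y => by rw [hc, cross_apply]
  have hKV : K ⊆ (U ∩ {y | c y ≠ 0}) ×ˢ univ := prod_mono (fun y hy =>
    ⟨hωU hy, by simpa [hcross] using crossProduct_ne_zero_iff_linearIndependent.2 (hind y hy)⟩)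
    (subset_univ _)
  have hdΘ : ContinuousOn (fderiv ℝ Θ) K :=
    (continuousOn_fderiv_shellChart hUo (hθ.of_le (by norm_num)) ha hcross ha3 hΘ).mono hKV
  have hg : ∀ i, ContinuousOn (gvec i) K := by
    intro i
    fin_cases i
    · exact (hdΘ.clm_apply continuousOn_const).congr fun p _ => hgvec0 p
    · exact (hdΘ.clm_apply continuousOn_const).congr fun p _ => hgvec1 p
    · exact (hdΘ.clm_apply continuousOn_const).congr fun p _ => hgvec2 p
  obtain ⟨M, hM, hbound⟩ := (hωb.isCompact_closure.prod isCompact_Icc).exists_pos_forall_le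
    (continuousOn_finsetSum _ fun i _ => continuousOn_finsetSum _ fun m _ =>
      ((continuous_apply m).comp_continuousOn (hg i)).pow 2)
  refine ⟨M ^ 2 / rho, by positivity, fun ε hε hεε₀ p hp t ht => ?_⟩
  have hq : (p.1, ε * p.2) ∈ K :=
    ⟨hp.1, by nlinarith [hp.2.1, hp.2.2], by nlinarith [hp.2.1, hp.2.2]⟩
  set W : Matrix (Fin 3) (Fin 3) ℝ := .of fun i m => gvec i (p.1, ε * p.2) m
  have hGW : G (p.1, ε * p.2) = W * Wᵀ := Matrix.ext fun i j => by simp [hG, mul_apply, W]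
  have hW : LinearIndependent ℝ W.row := by
    convert hgind _ hq using 1
    ext i : 1
    fin_cases i <;> rfl
  simp only [hBε, hGinv, hGW]
  exact sum_sq_le_mul_sum_isotropic_tensor hthv hrho hM
    (smul_one_le_inv_mul_transpose_self hW hM (hbound _ hq)) ht

/-- Uniform positive definiteness of the scaled three-dimensional viscosity tensor
`B^{ijkl}(ε)`: the constant is independent of the point of the fixed domain and of the
thickness parameter `ε ∈ (0, ε₀]`. -/
theorem stmt15 (ω : Set (Fin 2 → ℝ)) (hωo : IsOpen ω) (hωb : Bornology.IsBounded ω)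
    (hωc : IsConnected ω)
    (U : Set (Fin 2 → ℝ)) (hUo : IsOpen U) (hωU : closure ω ⊆ U)
    (θ : (Fin 2 → ℝ) → Fin 3 → ℝ) (hθ : ContDiffOn ℝ 3 θ U) (hθinj : InjOn θ (closure ω))
    (a : Fin 2 → (Fin 2 → ℝ) → Fin 3 → ℝ)
    (ha : ∀ α y, a α y = fderiv ℝ θ y (Pi.single α 1))
    (hind : ∀ y ∈ closure ω, LinearIndependent ℝ ![a 0 y, a 1 y])
    (c : (Fin 2 → ℝ) → Fin 3 → ℝ)
    (hc : ∀ y, c y = ![a 0 y 1 * a 1 y 2 - a 0 y 2 * a 1 y 1,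
                       a 0 y 2 * a 1 y 0 - a 0 y 0 * a 1 y 2,
                       a 0 y 0 * a 1 y 1 - a 0 y 1 * a 1 y 0])
    (a3 : (Fin 2 → ℝ) → Fin 3 → ℝ)
    (ha3 : ∀ y, a3 y = (Real.sqrt (∑ i, c y i ^ 2))⁻¹ • c y)
    (Θ : (Fin 2 → ℝ) × ℝ → Fin 3 → ℝ)
    (hΘ : ∀ p, Θ p = θ p.1 + p.2 • a3 p.1)
    (gvec : Fin 3 → ((Fin 2 → ℝ) × ℝ) → Fin 3 → ℝ)
    (hgvec0 : ∀ p, gvec 0 p = fderiv ℝ Θ p (Pi.single 0 1, 0))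
    (hgvec1 : ∀ p, gvec 1 p = fderiv ℝ Θ p (Pi.single 1 1, 0))
    (hgvec2 : ∀ p, gvec 2 p = fderiv ℝ Θ p (0, 1))
    (ε₀ : ℝ) (hε₀ : 0 < ε₀)
    (hgind : ∀ p ∈ closure ω ×ˢ Icc (-ε₀) ε₀,
      LinearIndependent ℝ ![gvec 0 p, gvec 1 p, gvec 2 p])
    (thv rho : ℝ) (hthv : 0 ≤ thv) (hrho : 0 < rho)
    (G : ((Fin 2 → ℝ) × ℝ) → Matrix (Fin 3) (Fin 3) ℝ)
    (hG : ∀ p i j, G p i j = ∑ m, gvec i p m * gvec j p m)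
    (Ginv : ℝ → ((Fin 2 → ℝ) × ℝ) → Matrix (Fin 3) (Fin 3) ℝ)
    (hGinv : ∀ ε p, Ginv ε p = (G (p.1, ε * p.2))⁻¹)
    (Bε : ℝ → ((Fin 2 → ℝ) × ℝ) → Fin 3 → Fin 3 → Fin 3 → Fin 3 → ℝ)
    (hBε : ∀ ε p i j k l, Bε ε p i j k l = thv * Ginv ε p i j * Ginv ε p k l
      + (rho / 2) * (Ginv ε p i k * Ginv ε p j l + Ginv ε p i l * Ginv ε p j k)) :
    ∃ Cv > (0 : ℝ), ∀ ε : ℝ, 0 < ε → ε ≤ ε₀ →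
      ∀ p ∈ closure ω ×ˢ Icc (-1 : ℝ) 1,
        ∀ t : Matrix (Fin 3) (Fin 3) ℝ, t.IsSymm →
          ∑ i, ∑ j, |t i j| ^ 2 ≤ Cv * ∑ i, ∑ j, ∑ k, ∑ l, Bε ε p i j k l * t k l * t i j :=
  stmt15_general ω hωb U hUo hωU θ hθ a ha hind c hc a3 ha3 Θ hΘ gvec hgvec0 hgvec1 hgvec2 ε₀ hgind
    thv rho hthv hrho G hG Ginv hGinv Bε hBε
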